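/- arXiv:1503.04226 — 5 statements merged into one kernel-verified Lean document; each statement's English description precedes it below -/
import Mathlib

section
/- Let v be a positive integer and let A, B, C, D be circulant matrices of order v with entries in {−1, +1} (indexed by ℤ/vℤ) such that Aᵀ = A, B = C, and A·Aᵀ + B·Bᵀ + C·Cᵀ + D·Dᵀ = 4v·I. Let R be the back-diagonal permutation matrix of order v, i.e. R(i,j) = 1 if i + j = −1 in ℤ/vℤ and R(i,j) = 0 otherwise. Then the 4v × 4v block matrix GP = [[A, BR, CR, DR], [CR, DᵀR, −A, −BᵀR], [BR, −A, −DᵀR, CᵀR], [DR, −CᵀR, BᵀR, −A]] is a symmetric Hadamard matrix of order 4v; that is, all entries of GP are ±1, GP·GPᵀ = 4v·I, and GPᵀ = GP. -/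
open Matrix

/-- A matrix indexed by `ZMod v` is circulant if its entries depend only on
the difference of the indices, i.e. it is invariant under simultaneous shifts. -/
def IsCirculant {v : ℕ} (M : Matrix (ZMod v) (ZMod v) ℤ) : Prop :=
  ∀ i j k : ZMod v, M (i + k) (j + k) = M i j

/-- The back-diagonal permutation matrix `R` of order `v`:
`R i j = 1` if `i + j = -1` in `ZMod v`, and `0` otherwise. -/
def backDiag (v : ℕ) : Matrix (ZMod v) (ZMod v) ℤ :=
  Matrix.of fun i j => if i + j = -1 then 1 else 0

section helpers
variable {v : ℕ} [NeZero v] {M N : Matrix (ZMod v) (ZMod v) ℤ}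

lemma mulR_apply (M : Matrix (ZMod v) (ZMod v) ℤ) (i j : ZMod v) :
    (M * backDiag v) i j = M i (-1 - j) := by
  rw [Matrix.mul_apply]
  simp only [backDiag, Matrix.of_apply, mul_ite, mul_one, mul_zero]
  rw [(Finset.sum_congr rfl (fun k _ => if_congr
    ⟨fun h => by linear_combination h, fun h => by linear_combination h⟩ rfl rfl) :
    ∑ k, (if k + j = -1 then M i k else 0) = ∑ k, (if k = -1 - j then M i k else 0))]
  rw [Finset.sum_ite_eq' Finset.univ (-1 - j) (fun k => M i k)]
  simp

lemma Rmul_apply (M : Matrix (ZMod v) (ZMod v) ℤ) (i j : ZMod v) :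
    (backDiag v * M) i j = M (-1 - i) j := by
  rw [Matrix.mul_apply]
  simp only [backDiag, Matrix.of_apply, ite_mul, one_mul, zero_mul]
  rw [(Finset.sum_congr rfl (fun k _ => if_congr
    ⟨fun h => by linear_combination h, fun h => by linear_combination h⟩ rfl rfl) :
    ∑ k, (if i + k = -1 then M k j else 0) = ∑ k, (if k = -1 - i then M k j else 0))]
  rw [Finset.sum_ite_eq' Finset.univ (-1 - i) (fun k => M k j)]
  simp

lemma transpose_circ (hM : IsCirculant M) : IsCirculant Mᵀ :=
  fun i j k => hM j i k

lemma R_mul_R : backDiag v * backDiag v = 1 := by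
  ext i j
  rw [mulR_apply]
  simp only [backDiag, Matrix.of_apply, Matrix.one_apply]
  by_cases h : i = j
  · subst h; rw [if_pos rfl, if_pos (by ring)]
  · rw [if_neg h, if_neg (fun hc => h (by linear_combination hc))]

lemma RMR (hM : IsCirculant M) : backDiag v * M * backDiag v = Mᵀ := by
  ext i j
  rw [mulR_apply, Rmul_apply, Matrix.transpose_apply]
  have := hM j i (-1 - i - j)
  rw [show j + (-1 - i - j) = -1 - i from by ring, show i + (-1 - i - j) = -1 - j from by ring] at this
  exact this

lemma R_comm (hM : IsCirculant M) : backDiag v * M = Mᵀ * backDiag v := by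
  have h := congrArg (· * backDiag v) (RMR hM)
  simpa only [mul_assoc, R_mul_R, mul_one] using h

lemma comm_R (hM : IsCirculant M) : M * backDiag v = backDiag v * Mᵀ := by
  rw [R_comm (transpose_circ hM), transpose_transpose]

lemma mulR_mulR (hN : IsCirculant N) (M : Matrix (ZMod v) (ZMod v) ℤ) :
    (M * backDiag v) * (N * backDiag v) = M * Nᵀ := by
  rw [mul_assoc, ← mul_assoc (backDiag v), RMR hN]

lemma R_transpose : (backDiag v)ᵀ = backDiag v := by
  ext i j; simp only [backDiag, Matrix.transpose_apply, Matrix.of_apply, add_comm]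

lemma mulR_symm (hM : IsCirculant M) : (M * backDiag v)ᵀ = M * backDiag v := by
  rw [Matrix.transpose_mul, R_transpose, ← comm_R hM]

lemma circ_comm (hM : IsCirculant M) (hN : IsCirculant N) : M * N = N * M := by
  ext i j
  rw [Matrix.mul_apply, Matrix.mul_apply]
  apply Fintype.sum_equiv (Equiv.subLeft (i + j))
  intro k
  simp only [Equiv.subLeft_apply]
  have h1 : M i k = M (i + j - k) j := by
    have := hM (i + j - k) j (k - j)
    rw [show i + j - k + (k - j) = i from by ring, show j + (k - j) = k from by ring] at this
    exact this
  have h2 : N k j = N i (i + j - k) := by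
    have := hN k j (i - k)
    rw [show k + (i - k) = i from by ring, show j + (i - k) = i + j - k from by ring] at this
    exact this.symm
  rw [h1, h2, mul_comm]
end helpers

lemma mulR_mul {v : ℕ} [NeZero v] {N : Matrix (ZMod v) (ZMod v) ℤ} (hN : IsCirculant N)
    (M : Matrix (ZMod v) (ZMod v) ℤ) :
    (M * backDiag v) * N = M * Nᵀ * backDiag v := by
  rw [mul_assoc, R_comm hN, ← mul_assoc]

lemma mulR_R {v : ℕ} [NeZero v] (M : Matrix (ZMod v) (ZMod v) ℤ) :
    M * backDiag v * backDiag v = M := by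
  rw [mul_assoc, R_mul_R, mul_one]

lemma blockMul {v : ℕ} [NeZero v] (F G : Fin 4 → Fin 4 → Matrix (ZMod v) (ZMod v) ℤ) :
    (Matrix.of fun p q : Fin 4 × ZMod v => F p.1 q.1 p.2 q.2) *
      (Matrix.of fun p q : Fin 4 × ZMod v => G p.1 q.1 p.2 q.2) =
    Matrix.of fun p q : Fin 4 × ZMod v => (∑ k : Fin 4, F p.1 k * G k q.1) p.2 q.2 := by
  ext ⟨i, a⟩ ⟨j, b⟩
  rw [Matrix.mul_apply]
  simp only [Matrix.of_apply, Matrix.sum_apply, Matrix.mul_apply]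
  rw [Fintype.sum_prod_type]

/-- The GP array of Balonin and Seberry, built from four matrices of order `v`,
as a `4v × 4v` matrix indexed by `Fin 4 × ZMod v`. -/
def GParray (v : ℕ) [NeZero v] (A B C D : Matrix (ZMod v) (ZMod v) ℤ) :
    Matrix (Fin 4 × ZMod v) (Fin 4 × ZMod v) ℤ :=
  Matrix.of fun p q =>
    (![![A, B * backDiag v, C * backDiag v, D * backDiag v],
       ![C * backDiag v, Dᵀ * backDiag v, -A, -(Bᵀ * backDiag v)],
       ![B * backDiag v, -A, -(Dᵀ * backDiag v), Cᵀ * backDiag v],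
       ![D * backDiag v, -(Cᵀ * backDiag v), Bᵀ * backDiag v, -A]] p.1 q.1) p.2 q.2

/-- If `A, B, C, D` are circulant `±1` matrices of order `v` with `Aᵀ = A`, `B = C`
and `A·Aᵀ + B·Bᵀ + C·Cᵀ + D·Dᵀ = 4v·I`, then the GP array built from them is a
symmetric Hadamard matrix of order `4v`. -/
theorem gp_array_symmetric_hadamard (v : ℕ) [NeZero v]
    (A B C D : Matrix (ZMod v) (ZMod v) ℤ)
    (hAcirc : IsCirculant A) (hBcirc : IsCirculant B)
    (hCcirc : IsCirculant C) (hDcirc : IsCirculant D)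
    (hApm : ∀ i j, A i j = 1 ∨ A i j = -1)
    (hBpm : ∀ i j, B i j = 1 ∨ B i j = -1)
    (hCpm : ∀ i j, C i j = 1 ∨ C i j = -1)
    (hDpm : ∀ i j, D i j = 1 ∨ D i j = -1)
    (hAsym : Aᵀ = A) (hBC : B = C)
    (hsum : A * Aᵀ + B * Bᵀ + C * Cᵀ + D * Dᵀ =
      ((4 * v : ℕ) : ℤ) • (1 : Matrix (ZMod v) (ZMod v) ℤ)) :
    (∀ p q, GParray v A B C D p q = 1 ∨ GParray v A B C D p q = -1) ∧
    GParray v A B C D * (GParray v A B C D)ᵀ =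
      ((4 * v : ℕ) : ℤ) • (1 : Matrix (Fin 4 × ZMod v) (Fin 4 × ZMod v) ℤ) ∧
    (GParray v A B C D)ᵀ = GParray v A B C D := by
  subst hBC
  rw [hAsym] at hsum
  have hBt := transpose_circ hBcirc
  have hDt := transpose_circ hDcirc
  -- pointwise symmetry facts
  have pA : ∀ a b : ZMod v, A b a = A a b := fun a b => congrFun (congrFun hAsym a) b
  have pBR : ∀ a b : ZMod v, (B * backDiag v) b a = (B * backDiag v) a b :=
    fun a b => congrFun (congrFun (mulR_symm hBcirc) a) b
  have pDR : ∀ a b : ZMod v, (D * backDiag v) b a = (D * backDiag v) a b :=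
    fun a b => congrFun (congrFun (mulR_symm hDcirc) a) b
  have pBtR : ∀ a b : ZMod v, (Bᵀ * backDiag v) b a = (Bᵀ * backDiag v) a b :=
    fun a b => congrFun (congrFun (mulR_symm hBt) a) b
  have pDtR : ∀ a b : ZMod v, (Dᵀ * backDiag v) b a = (Dᵀ * backDiag v) a b :=
    fun a b => congrFun (congrFun (mulR_symm hDt) a) b
  have hGsym : (GParray v A B B D)ᵀ = GParray v A B B D := by
    ext ⟨i, a⟩ ⟨j, b⟩
    fin_cases i <;> fin_cases j <;>
      simp only [GParray, Matrix.transpose_apply, Matrix.of_apply,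
        Matrix.cons_val', Matrix.cons_val_zero, Matrix.cons_val_one, Matrix.head_cons,
        Matrix.cons_val_fin_one, Matrix.empty_val', Matrix.cons_val_two, Matrix.tail_cons,
        Matrix.cons_val_three, Matrix.head_fin_const, Matrix.neg_apply] <;>
      first
        | exact pA a b | exact pBR a b | exact pDR a b | exact pBtR a b | exact pDtR a b
        | exact congrArg Neg.neg (pA a b) | exact congrArg Neg.neg (pBR a b)
        | exact congrArg Neg.neg (pBtR a b) | exact congrArg Neg.neg (pDtR a b)
        | rfl
  refine ⟨?_, ?_, hGsym⟩
  · rintro ⟨i, a⟩ ⟨j, b⟩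
    have negpm : ∀ x : ℤ, (x = 1 ∨ x = -1) → (-x = 1 ∨ -x = -1) := by
      rintro x (h | h) <;> simp [h]
    fin_cases i <;> fin_cases j <;>
      simp [GParray, mulR_apply, Matrix.neg_apply, Matrix.transpose_apply] <;>
      first
        | exact hApm a b | exact hBpm _ _ | exact hDpm _ _
        | exact (hApm a b).symm.imp (fun h => by rw [h]; norm_num) id
        | exact (hBpm _ _).symm.imp (fun h => by rw [h]; norm_num) id
        | exact (hDpm _ _).symm.imp (fun h => by rw [h]; norm_num) id
  · rw [hGsym]
    have cBA : B * A = A * B := circ_comm hBcirc hAcirc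
    have cBtA : Bᵀ * A = A * Bᵀ := circ_comm hBt hAcirc
    have cDA : D * A = A * D := circ_comm hDcirc hAcirc
    have cDtA : Dᵀ * A = A * Dᵀ := circ_comm hDt hAcirc
    have cBtB : Bᵀ * B = B * Bᵀ := circ_comm hBt hBcirc
    have cDB : D * B = B * D := circ_comm hDcirc hBcirc
    have cDtB : Dᵀ * B = B * Dᵀ := circ_comm hDt hBcirc
    have cDBt : D * Bᵀ = Bᵀ * D := circ_comm hDcirc hBt
    have cDtBt : Dᵀ * Bᵀ = Bᵀ * Dᵀ := circ_comm hDt hBt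
    have cDtD : Dᵀ * D = D * Dᵀ := circ_comm hDt hDcirc
    have hone : ((4 * v : ℕ) : ℤ) • (1 : Matrix (Fin 4 × ZMod v) (Fin 4 × ZMod v) ℤ) =
        Matrix.of fun p q : Fin 4 × ZMod v =>
          ((![![((4 * v : ℕ) : ℤ) • 1, 0, 0, 0],
              ![0, ((4 * v : ℕ) : ℤ) • 1, 0, 0],
              ![0, 0, ((4 * v : ℕ) : ℤ) • 1, 0],
              ![0, 0, 0, ((4 * v : ℕ) : ℤ) • 1]] :
            Fin 4 → Fin 4 → Matrix (ZMod v) (ZMod v) ℤ) p.1 q.1) p.2 q.2 := by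
      ext ⟨i, a⟩ ⟨j, b⟩
      rw [Matrix.of_apply, Matrix.smul_apply, Matrix.one_apply]
      rcases eq_or_ne i j with hij | hij
      · subst hij
        rw [show (![![((4 * v : ℕ) : ℤ) • 1, 0, 0, 0],
              ![0, ((4 * v : ℕ) : ℤ) • 1, 0, 0],
              ![0, 0, ((4 * v : ℕ) : ℤ) • 1, 0],
              ![0, 0, 0, ((4 * v : ℕ) : ℤ) • 1]] :
            Fin 4 → Fin 4 → Matrix (ZMod v) (ZMod v) ℤ) i i
            = ((4 * v : ℕ) : ℤ) • (1 : Matrix (ZMod v) (ZMod v) ℤ) from by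
              fin_cases i <;> rfl,
          Matrix.smul_apply, Matrix.one_apply]
        rcases eq_or_ne a b with hab | hab
        · simp [hab]
        · simp [hab, Prod.ext_iff]
      · rw [show (![![((4 * v : ℕ) : ℤ) • 1, 0, 0, 0],
              ![0, ((4 * v : ℕ) : ℤ) • 1, 0, 0],
              ![0, 0, ((4 * v : ℕ) : ℤ) • 1, 0],
              ![0, 0, 0, ((4 * v : ℕ) : ℤ) • 1]] :
            Fin 4 → Fin 4 → Matrix (ZMod v) (ZMod v) ℤ) i j
            = (0 : Matrix (ZMod v) (ZMod v) ℤ) from by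
              fin_cases i <;> fin_cases j <;> first | rfl | exact absurd rfl hij,
          Matrix.zero_apply, if_neg (by simp [Prod.ext_iff, hij]), smul_zero]
    rw [show GParray v A B B D = Matrix.of (fun p q : Fin 4 × ZMod v =>
        ((![![A, B * backDiag v, B * backDiag v, D * backDiag v],
            ![B * backDiag v, Dᵀ * backDiag v, -A, -(Bᵀ * backDiag v)],
            ![B * backDiag v, -A, -(Dᵀ * backDiag v), Bᵀ * backDiag v],
            ![D * backDiag v, -(Bᵀ * backDiag v), Bᵀ * backDiag v, -A]] :
          Fin 4 → Fin 4 → Matrix (ZMod v) (ZMod v) ℤ) p.1 q.1) p.2 q.2) from rfl,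
      blockMul, hone]
    set S : Matrix (ZMod v) (ZMod v) ℤ := ((4 * v : ℕ) : ℤ) • 1 with hS
    ext ⟨i, a⟩ ⟨j, b⟩
    rw [Matrix.of_apply, Matrix.of_apply]
    fin_cases i <;> fin_cases j <;>
      refine congrFun (congrFun ?_ a) b <;>
      simp only [Fin.sum_univ_four] <;>
      simp [← mul_assoc, mulR_mul hAcirc, mulR_mul hBcirc, mulR_mul hDcirc,
        mulR_mul hBt, mulR_mul hDt, mulR_R, hAsym, Matrix.transpose_transpose,
        cBA, cBtA, cDA, cDtA, cBtB, cDB, cDtB, cDBt, cDtBt, cDtD]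
    all_goals try abel
    all_goals rw [← hsum]
    all_goals abel
end

section
/- There exists a symmetric Hadamard matrix of order 92; that is, there exists a 92 × 92 matrix H with entries in {−1, +1} such that H·Hᵀ = 92·I and Hᵀ = H. -/
/-!
Let `a`, `b`, `d` be `±1` sequences on `ℤ/23` with `a` even, whose circulants satisfy
`A Aᵀ + 2 B Bᵀ + D Dᵀ = 92 I`. Arrange `A`, `B`, `D`, their transposes and the back-circulants
`B P`, `D P` (`P` the reversal permutation) in a propus-type `4 × 4` block array. Circulants
commute, a back-circulant `K` turns a circulant it passes into its transpose (`K C = Cᵀ K`), and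
`(C P) (C' P) = C C'ᵀ`, so in `H Hᵀ` every off-diagonal block cancels and every diagonal block is
`A Aᵀ + 2 B Bᵀ + D Dᵀ`. Since `a` is even, `A` is symmetric, and so is the array.
-/

open Matrix

namespace Matrix

variable {G R : Type*}

def backCirculant [Add G] (v : G → R) : Matrix G G R := of fun i j => v (i + j)

@[simp]
theorem backCirculant_apply [Add G] (v : G → R) (i j : G) : backCirculant v i j = v (i + j) :=
  rfl

theorem transpose_backCirculant [AddCommMagma G] (v : G → R) :
    (backCirculant v)ᵀ = backCirculant v := by
  ext i j
  exact congrArg v (add_comm j i)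

theorem transpose_circulant_of_even [SubtractionMonoid G] {v : G → R} (hv : v.Even) :
    (circulant v)ᵀ = circulant v := by
  rw [transpose_circulant]
  exact congrArg circulant (funext hv)

variable [AddCommGroup G] [Fintype G] [CommSemiring R]

theorem backCirculant_mul_circulant (v w : G → R) :
    backCirculant v * circulant w = (circulant w)ᵀ * backCirculant v := by
  ext i j
  simp only [mul_apply, backCirculant_apply, transpose_apply, circulant_apply]
  refine Fintype.sum_equiv ((Equiv.subRight j).trans (Equiv.addLeft i)) _ _ fun k => ?_
  simp only [Equiv.trans_apply, Equiv.subRight_apply, Equiv.coe_addLeft]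
  rw [mul_comm]
  congr 2 <;> abel

theorem circulant_mul_backCirculant_comm (v w : G → R) :
    circulant v * backCirculant w = circulant w * backCirculant v := by
  ext i j
  simp only [mul_apply, backCirculant_apply, circulant_apply]
  refine Fintype.sum_equiv ((Equiv.subLeft i).trans (Equiv.subRight j)) _ _ fun k => ?_
  simp only [Equiv.trans_apply, Equiv.subLeft_apply, Equiv.subRight_apply]
  rw [mul_comm]
  congr 2 <;> abel

theorem backCirculant_mul_backCirculant (v w : G → R) :
    backCirculant v * backCirculant w = circulant v * (circulant w)ᵀ := by
  ext i j
  simp only [mul_apply, backCirculant_apply, transpose_apply, circulant_apply]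
  refine Fintype.sum_equiv (Equiv.neg G) _ _ fun k => ?_
  simp only [Equiv.neg_apply, sub_neg_eq_add, add_comm j]

end Matrix

section Propus

variable {G R : Type*} [AddCommGroup G]

def propusBlocks [Neg R] (a b d : G → R) : Matrix (Fin 4) (Fin 4) (Matrix G G R) :=
  !![-backCirculant d, circulant a, (circulant b)ᵀ, -backCirculant b;
     circulant a, backCirculant d, -(circulant b)ᵀ, -backCirculant b;
     circulant b, -circulant b, circulant a, -circulant d;
     -backCirculant b, -backCirculant b, -(circulant d)ᵀ, -circulant a]

def propus [Neg R] (a b d : G → R) : Matrix (Fin 4 × G) (Fin 4 × G) R :=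
  comp _ _ _ _ R (propusBlocks a b d)

theorem propus_transpose [Neg R] {a : G → R} (ha : a.Even) (b d : G → R) :
    (propus a b d)ᵀ = propus a b d := by
  rw [propus, transpose_comp]
  congr 1
  ext p q : 1
  fin_cases p <;> fin_cases q <;>
    simp only [propusBlocks, map_apply, transpose_apply, of_apply, Fin.reduceFinMk, Fin.isValue,
      cons_val, transpose_neg, transpose_transpose, transpose_circulant_of_even ha,
      transpose_backCirculant]

theorem isUnit_propus_apply [Monoid R] [HasDistribNeg R] {a b d : G → R}
    (ha : ∀ i, IsUnit (a i)) (hb : ∀ i, IsUnit (b i)) (hd : ∀ i, IsUnit (d i))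
    (p q : Fin 4 × G) : IsUnit (propus a b d p q) := by
  obtain ⟨p, i⟩ := p
  obtain ⟨q, j⟩ := q
  fin_cases p <;> fin_cases q <;>
    simp only [propus, comp_apply, propusBlocks, of_apply, Fin.reduceFinMk, Fin.isValue, cons_val,
      Matrix.neg_apply, transpose_apply, circulant_apply, backCirculant_apply, IsUnit.neg_iff,
      ha, hb, hd]

theorem propus_mul_transpose [CommRing R] [Fintype G] [DecidableEq G] {a : G → R} (ha : a.Even)
    (b d : G → R) {m : R}
    (h : circulant a * (circulant a)ᵀ + 2 • (circulant b * (circulant b)ᵀ)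
      + circulant d * (circulant d)ᵀ = m • 1) :
    propus a b d * (propus a b d)ᵀ = m • 1 := by
  have ha' : (fun i => a (-i)) = a := funext ha
  simp only [transpose_circulant, ha'] at h
  have hblocks : propusBlocks a b d * (propusBlocks a b d)ᵀ.map (·ᵀ) = m • 1 := by
    ext p q : 1
    fin_cases p <;> fin_cases q <;>
      simp only [propusBlocks, mul_apply, Fin.sum_univ_four, map_apply, transpose_apply, of_apply,
        Fin.reduceFinMk, Fin.isValue, cons_val, transpose_neg, transpose_transpose,
        transpose_circulant_of_even ha, transpose_backCirculant, Matrix.smul_apply] <;>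
      -- normal form: circulant factors first, at most one back-circulant, on the right
      simp only [neg_mul, mul_neg, neg_neg, backCirculant_mul_circulant,
        backCirculant_mul_backCirculant, transpose_circulant, ha', circulant_mul_comm,
        circulant_mul_backCirculant_comm, one_apply_eq, one_apply_ne, ne_eq, Fin.reduceEq,
        not_false_eq_true, smul_zero] <;>
      first | (rw [← h]; abel) | abel
  rw [propus, transpose_comp, ← compAlgEquiv_apply _ _ _ R, ← compAlgEquiv_apply _ _ _ R,
    ← map_mul, hblocks, map_smul, map_one]

end Propus

namespace Hadamard92

def a : Fin 23 → ℤ := ![1,-1,1,1,-1,1,-1,-1,-1,-1,-1,-1,-1,-1,-1,-1,-1,-1,1,-1,1,1,-1]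
def b : Fin 23 → ℤ := ![1,1,1,1,-1,-1,1,1,-1,-1,1,-1,1,-1,1,1,1,-1,1,-1,-1,-1,-1]
def d : Fin 23 → ℤ := ![1,-1,1,1,-1,-1,-1,1,1,1,-1,-1,1,1,-1,-1,1,-1,-1,1,-1,-1,-1]

theorem even_a : a.Even := by
  unfold Function.Even
  decide

theorem isUnit_a (i : Fin 23) : IsUnit (a i) := Int.isUnit_iff.mpr (by revert i; decide)
theorem isUnit_b (i : Fin 23) : IsUnit (b i) := Int.isUnit_iff.mpr (by revert i; decide)
theorem isUnit_d (i : Fin 23) : IsUnit (d i) := Int.isUnit_iff.mpr (by revert i; decide)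

theorem circulant_gram_sum :
    circulant a * (circulant a)ᵀ + 2 • (circulant b * (circulant b)ᵀ)
      + circulant d * (circulant d)ᵀ = (92 : ℤ) • 1 := by
  rw [← circulant_single_one]
  simp only [transpose_circulant, circulant_mul, ← circulant_smul, ← circulant_add,
    circulant_inj]
  funext s
  revert s
  decide

def H : Matrix (Fin 92) (Fin 92) ℤ :=
  reindexAlgEquiv ℤ ℤ (finProdFinEquiv : Fin 4 × Fin 23 ≃ Fin 92) (propus a b d)

theorem transpose_H : Hᵀ = H := by
  rw [H, coe_reindexAlgEquiv, transpose_reindex, propus_transpose even_a]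

theorem H_mul_transpose : H * Hᵀ = (92 : ℤ) • 1 := by
  have hsq := propus_mul_transpose even_a b d circulant_gram_sum
  rw [propus_transpose even_a] at hsq
  rw [transpose_H, H, ← map_mul, hsq, map_smul, map_one]

theorem H_apply_eq_one_or_eq_neg_one (i j : Fin 92) : H i j = 1 ∨ H i j = -1 :=
  Int.isUnit_iff.mp (isUnit_propus_apply isUnit_a isUnit_b isUnit_d _ _)

end Hadamard92

/-- There exists a symmetric Hadamard matrix of order 92. -/
theorem exists_symmetric_hadamard_92 :
    ∃ H : Matrix (Fin 92) (Fin 92) ℤ,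
      (∀ i j, H i j = 1 ∨ H i j = -1) ∧
      H * Hᵀ = (92 : ℤ) • (1 : Matrix (Fin 92) (Fin 92) ℤ) ∧
      Hᵀ = H :=
  ⟨Hadamard92.H, Hadamard92.H_apply_eq_one_or_eq_neg_one, Hadamard92.H_mul_transpose,
    Hadamard92.transpose_H⟩
end

section
/- Let q be a prime power with q ≡ 1 (mod 4), and set m = (q+1)/2. Then there exist circulant matrices A, B, C, D of order m with entries in {−1, +1} (indexed by ℤ/mℤ) satisfying Aᵀ = A, B = C, and A·Aᵀ + B·Bᵀ + C·Cᵀ + D·Dᵀ = 4m·I (such a quadruple is called propus matrices); consequently there exists a symmetric Hadamard matrix of order 2(q+1). -/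
open Matrix

open Finset

/-!
Let `K = 𝔽_{q²}`, let `g` generate `Kˣ` and let `𝔽_q = {x | x ^ q = x}`. The powers `g ^ t`,
`t ≤ q`, represent the `q + 1` points of the projective line over `𝔽_q`, and
`frobDet x y = (x y^q - x^q y) / δ`, with `δ = g ^ ((q+1)/2)` so that `δ^q = -δ`, is an
`𝔽_q`-valued alternating form vanishing exactly on proportional pairs. With `eulerChar` the
quadratic character `η` of `𝔽_q`, the matrix `η (frobDet (g^a) (g^t))` is a symmetric conference
matrix of order `q + 1`: for non-proportional `x, y`, the map `z ↦ frobDet y z / frobDet x z` is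
injective on the other `q` points by the Plücker relation, hence a bijection onto `𝔽_q`, on which
`η` sums to zero.

Multiplication by `g²` permutes the points in two orbits, the even and the odd `t`. Since
`g^(q+1)` is a non-square of `𝔽_q` and `m = (q+1)/2` is odd, twisting the entries by
`(-1)^(a+b)` turns the rows of the even points into two circulant matrices of order `m`
(`singerBlock 0`, symmetric with zero diagonal, and `singerBlock 1`) with
`M₀M₀ᵀ + M₁M₁ᵀ = q I`. Then `A = M₀ + I`, `B = C = M₁`, `D = M₀ - I` are propus matrices, and
the GP array built from them is a symmetric Hadamard matrix of order `4m`.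
-/

lemma ZMod.sum_univ_val_eq_sum_range {M : Type*} [AddCommMonoid M] (n : ℕ) [NeZero n]
    (f : ℕ → M) :
    ∑ k : ZMod n, f k.val = ∑ t ∈ range n, f t := by
  obtain ⟨n, rfl⟩ := Nat.exists_eq_succ_of_ne_zero (NeZero.ne n)
  exact Fin.sum_univ_eq_sum_range f (n + 1)

lemma Finset.sum_range_two_mul {M : Type*} [AddCommMonoid M] (f : ℕ → M) (n : ℕ) :
    ∑ t ∈ range (2 * n), f t = ∑ k ∈ range n, (f (2 * k) + f (2 * k + 1)) := by
  induction n with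
  | zero => simp
  | succ n ih =>
    rw [mul_add, mul_one, sum_range_succ, sum_range_succ, sum_range_succ, ih, add_assoc]

lemma ZMod.eq_of_two_mul_val_modEq {n : ℕ} {i j : ZMod (n + 1)}
    (h : 2 * i.val ≡ 2 * j.val [MOD 2 * n + 2]) : i = j := by
  have hi := ZMod.val_lt i
  have hj := ZMod.val_lt j
  rw [Nat.ModEq, Nat.mod_eq_of_lt (by omega), Nat.mod_eq_of_lt (by omega)] at h
  exact ZMod.val_injective _ (by omega)

namespace IsCirculant

variable {v : ℕ} {X Y : Matrix (ZMod v) (ZMod v) ℤ}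

lemma eq_circulant (hX : IsCirculant X) : X = circulant fun k => X k 0 := by
  ext i j
  simpa [sub_eq_add_neg] using (hX i j (-j)).symm

lemma transpose (hX : IsCirculant X) : IsCirculant Xᵀ := fun i j k => hX j i k

lemma mul_comm [NeZero v] (hX : IsCirculant X) (hY : IsCirculant Y) : X * Y = Y * X := by
  rw [hX.eq_circulant, hY.eq_circulant, circulant_mul_comm]

lemma one : IsCirculant (1 : Matrix (ZMod v) (ZMod v) ℤ) := fun i j k => by
  simp [one_apply]

lemma add (hX : IsCirculant X) (hY : IsCirculant Y) : IsCirculant (X + Y) := fun i j k => by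
  simp [hX i j k, hY i j k]

lemma sub (hX : IsCirculant X) (hY : IsCirculant Y) : IsCirculant (X - Y) := fun i j k => by
  simp [hX i j k, hY i j k]

end IsCirculant

def IsSignMatrix {m n : Type*} (M : Matrix m n ℤ) : Prop := ∀ i j, M i j = 1 ∨ M i j = -1

lemma IsSignMatrix.neg {m n : Type*} {M : Matrix m n ℤ} (hM : IsSignMatrix M) :
    IsSignMatrix (-M) :=
  fun i j => by rcases hM i j with h | h <;> simp [h]

lemma IsSignMatrix.transpose {m n : Type*} {M : Matrix m n ℤ} (hM : IsSignMatrix M) :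
    IsSignMatrix Mᵀ :=
  fun i j => hM j i

section Reversal

variable {v : ℕ} [NeZero v]

def reversal (v : ℕ) : Matrix (ZMod v) (ZMod v) ℤ := (Equiv.neg (ZMod v)).toPEquiv.toMatrix

lemma mul_reversal_apply (X : Matrix (ZMod v) (ZMod v) ℤ) (i j : ZMod v) :
    (X * reversal v) i j = X i (-j) := by
  simp [reversal, PEquiv.mul_toMatrix_toPEquiv]

lemma reversal_mul_reversal : reversal v * reversal v = 1 := by
  ext i j
  rw [mul_reversal_apply]
  simp [reversal, one_apply, neg_eq_iff_eq_neg]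

lemma IsCirculant.mul_reversal_symm {X : Matrix (ZMod v) (ZMod v) ℤ} (hX : IsCirculant X) :
    (X * reversal v)ᵀ = X * reversal v := by
  ext i j
  simpa [mul_reversal_apply, sub_eq_add_neg] using (hX j (-i) (i - j)).symm

lemma reversal_transpose : (reversal v)ᵀ = reversal v := by
  simpa using IsCirculant.one.mul_reversal_symm (v := v)

lemma IsCirculant.reversal_mul {X : Matrix (ZMod v) (ZMod v) ℤ} (hX : IsCirculant X) :
    reversal v * X = Xᵀ * reversal v := by
  rw [← hX.transpose.mul_reversal_symm, transpose_mul, reversal_transpose, transpose_transpose]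

lemma IsSignMatrix.mul_reversal {M : Matrix (ZMod v) (ZMod v) ℤ} (hM : IsSignMatrix M) :
    IsSignMatrix (M * reversal v) :=
  fun i j => by simpa only [mul_reversal_apply] using hM i (-j)

end Reversal

section GPArray

variable {v : ℕ} [NeZero v]

-- `X * R` is symmetric for circulant `X`, so every block is symmetric.
def gpBlocks (A B D : Matrix (ZMod v) (ZMod v) ℤ) :
    Matrix (Fin 4) (Fin 4) (Matrix (ZMod v) (ZMod v) ℤ) :=
  let R := reversal v
  !![A, B * R, B * R, D * R;
     B * R, Dᵀ * R, -A, -(Bᵀ * R);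
     B * R, -A, -(Dᵀ * R), Bᵀ * R;
     D * R, -(Bᵀ * R), Bᵀ * R, -A]

def gpArray (A B D : Matrix (ZMod v) (ZMod v) ℤ) : Matrix (Fin 4 × ZMod v) (Fin 4 × ZMod v) ℤ :=
  comp _ _ _ _ _ (gpBlocks A B D)

variable {A B D : Matrix (ZMod v) (ZMod v) ℤ}

lemma gpBlocks_mul_self (hA : IsCirculant A) (hB : IsCirculant B) (hD : IsCirculant D)
    (hAs : Aᵀ = A) :
    gpBlocks A B D * gpBlocks A B D = diagonal fun _ => A * Aᵀ + B * Bᵀ + B * Bᵀ + D * Dᵀ := by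
  have hRX : ∀ X Y : Matrix (ZMod v) (ZMod v) ℤ, IsCirculant X →
      reversal v * (X * Y) = Xᵀ * (reversal v * Y) := fun X Y hX => by
    rw [← Matrix.mul_assoc, hX.reversal_mul, Matrix.mul_assoc]
  have hcomm : ∀ X Y : Matrix (ZMod v) (ZMod v) ℤ, IsCirculant X → IsCirculant Y →
      X * Y = Y * X := fun X Y hX hY => hX.mul_comm hY
  have hlcomm : ∀ X Y Z : Matrix (ZMod v) (ZMod v) ℤ, IsCirculant X → IsCirculant Y →
      X * (Y * Z) = Y * (X * Z) := fun X Y Z hX hY => by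
    rw [← Matrix.mul_assoc, hX.mul_comm hY, Matrix.mul_assoc]
  -- `simp` orders the commuting circulant factors, after which each block is an `abel` identity
  ext1 s t
  fin_cases s <;> fin_cases t <;>
    simp only [gpBlocks, of_apply, Matrix.cons_val, cons_val', cons_val_fin_one, cons_val_zero,
      cons_val_one, Fin.isValue, Fin.zero_eta, Fin.mk_one, Fin.reduceFinMk, Fin.reduceEq,
      Matrix.mul_apply, Fin.sum_univ_four, diagonal_apply_eq, diagonal_apply_ne, ne_eq,
      one_ne_zero, zero_ne_one, not_false_eq_true, Matrix.mul_assoc, mul_neg, neg_mul, neg_neg,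
      transpose_transpose, hAs, hRX, hA.reversal_mul, reversal_mul_reversal, mul_one, hcomm,
      hlcomm, hA, hB, hD, hB.transpose, hD.transpose] <;>
    abel

lemma gpArray_transpose (hB : IsCirculant B) (hD : IsCirculant D) (hAs : Aᵀ = A) :
    (gpArray A B D)ᵀ = gpArray A B D := by
  rw [gpArray, transpose_comp]
  congr 1
  ext1 s t
  fin_cases s <;> fin_cases t <;>
    simp [gpBlocks, hAs, hB.mul_reversal_symm, hD.mul_reversal_symm,
      hB.transpose.mul_reversal_symm, hD.transpose.mul_reversal_symm]

lemma IsSignMatrix.gpArray (hA : IsSignMatrix A) (hB : IsSignMatrix B) (hD : IsSignMatrix D) :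
    IsSignMatrix (gpArray A B D) := by
  rintro ⟨s, i⟩ ⟨t, j⟩
  fin_cases s <;> fin_cases t
  all_goals first
    | exact hA i j | exact hA.neg i j | exact hB.mul_reversal i j | exact hD.mul_reversal i j
    | exact hB.transpose.mul_reversal i j | exact hB.transpose.mul_reversal.neg i j
    | exact hD.transpose.mul_reversal i j | exact hD.transpose.mul_reversal.neg i j

end GPArray

structure IsPropus {v : ℕ} [NeZero v] (A B C D : Matrix (ZMod v) (ZMod v) ℤ) : Prop where
  isCirculant_A : IsCirculant A
  isCirculant_B : IsCirculant B
  isCirculant_C : IsCirculant C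
  isCirculant_D : IsCirculant D
  isSignMatrix_A : IsSignMatrix A
  isSignMatrix_B : IsSignMatrix B
  isSignMatrix_C : IsSignMatrix C
  isSignMatrix_D : IsSignMatrix D
  transpose_A : Aᵀ = A
  B_eq_C : B = C
  gram : A * Aᵀ + B * Bᵀ + C * Cᵀ + D * Dᵀ = ((4 * v : ℕ) : ℤ) • 1

namespace IsPropus

variable {v : ℕ} [NeZero v] {A B C D : Matrix (ZMod v) (ZMod v) ℤ}

lemma gpArray_mul_transpose (h : IsPropus A B C D) :
    gpArray A B D * (gpArray A B D)ᵀ = ((4 * v : ℕ) : ℤ) • 1 := by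
  obtain rfl := h.B_eq_C
  rw [gpArray_transpose h.isCirculant_B h.isCirculant_D h.transpose_A, gpArray,
    ← compRingEquiv_apply, ← map_mul, gpBlocks_mul_self h.isCirculant_A h.isCirculant_B
      h.isCirculant_D h.transpose_A, h.gram, smul_one_eq_diagonal, smul_one_eq_diagonal,
    compRingEquiv_apply, comp_diagonal_diagonal]

lemma exists_symm_hadamard (h : IsPropus A B C D) {n : ℕ} (hn : n = 4 * v) :
    ∃ H : Matrix (Fin n) (Fin n) ℤ, IsSignMatrix H ∧ H * Hᵀ = (n : ℤ) • 1 ∧ Hᵀ = H := by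
  let e : Fin 4 × ZMod v ≃ Fin n := Fintype.equivFinOfCardEq (by simp [hn])
  refine ⟨reindex e e (gpArray A B D), fun i j => (h.isSignMatrix_A.gpArray h.isSignMatrix_B
    h.isSignMatrix_D) _ _, ?_, ?_⟩
  · rw [reindex_apply, transpose_submatrix, submatrix_mul_equiv, h.gpArray_mul_transpose,
      smul_one_eq_diagonal, submatrix_diagonal_equiv, smul_one_eq_diagonal]
    simp [Function.comp_def, hn]
  · rw [reindex_apply, transpose_submatrix, gpArray_transpose h.isCirculant_B h.isCirculant_D
      h.transpose_A]

lemma of_conference {q : ℕ} {M N : Matrix (ZMod v) (ZMod v) ℤ} (hq : q + 1 = 2 * v)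
    (hM : IsCirculant M) (hN : IsCirculant N) (hMs : Mᵀ = M) (hdiag : ∀ i, M i i = 0)
    (hoff : ∀ i j, i ≠ j → M i j = 1 ∨ M i j = -1) (hNs : IsSignMatrix N)
    (hgram : M * Mᵀ + N * Nᵀ = (q : ℤ) • 1) : IsPropus (M + 1) N N (M - 1) where
  isCirculant_A := hM.add .one
  isCirculant_B := hN
  isCirculant_C := hN
  isCirculant_D := hM.sub .one
  isSignMatrix_A i j := by
    by_cases hij : i = j
    · simp [hij, hdiag]
    · simpa [hij] using hoff i j hij
  isSignMatrix_B := hNs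
  isSignMatrix_C := hNs
  isSignMatrix_D i j := by
    by_cases hij : i = j
    · simp [hij, hdiag]
    · simpa [hij, one_apply_ne] using hoff i j hij
  transpose_A := by rw [transpose_add, hMs, transpose_one]
  B_eq_C := rfl
  gram := by
    rw [hMs] at hgram
    rw [transpose_add, transpose_sub, hMs, transpose_one]
    calc (M + 1) * (M + 1) + N * Nᵀ + N * Nᵀ + (M - 1) * (M - 1)
        = (2 : ℤ) • (M * M + N * Nᵀ) + (2 : ℤ) • 1 := by noncomm_ring
      _ = ((4 * v : ℕ) : ℤ) • 1 := by
        rw [hgram, smul_smul, ← add_smul]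
        congr 1
        push_cast
        omega

end IsPropus

namespace Propus

variable {K : Type*} [Field K]

structure SingerSetup [Fintype K] (q s : ℕ) (g : Kˣ) : Prop where
  q_eq : q = 2 * s + 1
  even_s : Even s
  card_eq : Fintype.card K = q ^ 2
  mem_zpowers : ∀ x : Kˣ, x ∈ Subgroup.zpowers g
  sub_pow : ∀ x y : K, (x - y) ^ q = x ^ q - y ^ q

def frobDet (q s : ℕ) (g : Kˣ) (x y : K) : K := (x * y ^ q - x ^ q * y) / (g : K) ^ (s + 1)

section frobDet

variable {q s : ℕ} {g : Kˣ}

lemma frobDet_self (x : K) : frobDet q s g x x = 0 := by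
  simp [frobDet, mul_comm]

lemma frobDet_swap (x y : K) : frobDet q s g y x = -frobDet q s g x y := by
  simp only [frobDet]; ring

lemma frobDet_mul_frobDet (x y z w : K) :
    frobDet q s g x y * frobDet q s g z w =
      frobDet q s g x z * frobDet q s g y w - frobDet q s g x w * frobDet q s g y z := by
  simp only [frobDet]; ring

lemma frobDet_mul_left {c : K} (hc : c ^ q = c) (x y : K) :
    frobDet q s g (c * x) y = c * frobDet q s g x y := by
  simp only [frobDet, mul_pow, hc]; ring

lemma frobDet_mul_right {c : K} (hc : c ^ q = c) (x y : K) :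
    frobDet q s g x (c * y) = c * frobDet q s g x y := by
  simp only [frobDet, mul_pow, hc]; ring

lemma frobDet_mul_mul (z x y : K) :
    frobDet q s g (z * x) (z * y) = z * z ^ q * frobDet q s g x y := by
  simp only [frobDet, mul_pow]; ring

end frobDet

namespace SingerSetup

variable [Fintype K] {q s : ℕ} {g : Kˣ}

lemma s_pos (S : SingerSetup q s g) : 0 < s := by
  have := Fintype.one_lt_card (α := K)
  rw [S.card_eq, S.q_eq] at this
  by_contra h
  simp_all

lemma pow_q_pow_q (S : SingerSetup q s g) (x : K) : (x ^ q) ^ q = x := by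
  rw [← pow_mul, ← sq, ← S.card_eq, FiniteField.pow_card]

lemma orderOf_eq (S : SingerSetup q s g) : orderOf g = 2 * s * (2 * s + 2) := by
  rw [orderOf_eq_card_of_forall_mem_zpowers S.mem_zpowers, Nat.card_units,
    Nat.card_eq_fintype_card, S.card_eq, S.q_eq]
  exact Nat.sub_eq_of_eq_add (by ring)

lemma gpow_eq_gpow_iff (S : SingerSetup q s g) (a b : ℕ) :
    (g : K) ^ a = (g : K) ^ b ↔ a ≡ b [MOD 2 * s * (2 * s + 2)] := by
  rw [← S.orderOf_eq, ← pow_eq_pow_iff_modEq, ← Units.val_pow_eq_pow_val,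
    ← Units.val_pow_eq_pow_val, Units.val_inj]

lemma gpow_half_ne_one (S : SingerSetup q s g) : (g : K) ^ (s * (2 * s + 2)) ≠ 1 := by
  intro h
  rw [← pow_zero (g : K), S.gpow_eq_gpow_iff, Nat.modEq_zero_iff_dvd] at h
  have := Nat.le_of_dvd (by positivity [S.s_pos]) h
  nlinarith [S.s_pos]

lemma gpow_half (S : SingerSetup q s g) : (g : K) ^ (s * (2 * s + 2)) = -1 := by
  have hsq : (g : K) ^ (s * (2 * s + 2)) * (g : K) ^ (s * (2 * s + 2)) = 1 := by
    rw [← pow_add, ← pow_zero (g : K), S.gpow_eq_gpow_iff, Nat.modEq_zero_iff_dvd]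
    exact ⟨1, by ring⟩
  exact (mul_self_eq_one_iff.mp hsq).resolve_left S.gpow_half_ne_one

lemma neg_one_ne_one (S : SingerSetup q s g) : (-1 : K) ≠ 1 :=
  fun h => S.gpow_half_ne_one (S.gpow_half.trans h)

lemma gpow_order (S : SingerSetup q s g) : (g : K) ^ (2 * s * (2 * s + 2)) = 1 := by
  rw [← S.orderOf_eq, ← Units.val_pow_eq_pow_val, pow_orderOf_eq_one, Units.val_one]

/-- `g ^ (2s+2) = g ^ (q+1)` generates `𝔽_qˣ`. -/
lemma gen_pow_q (S : SingerSetup q s g) : ((g : K) ^ (2 * s + 2)) ^ q = (g : K) ^ (2 * s + 2) := by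
  rw [← pow_mul, S.q_eq, show (2 * s + 2) * (2 * s + 1) = 2 * s + 2 + 2 * s * (2 * s + 2) by ring,
    pow_add, S.gpow_order, mul_one]

lemma gen_pow_s (S : SingerSetup q s g) : ((g : K) ^ (2 * s + 2)) ^ s = -1 := by
  rw [← pow_mul, mul_comm, S.gpow_half]

lemma gpow_s_succ_pow_q (S : SingerSetup q s g) : ((g : K) ^ (s + 1)) ^ q = -(g : K) ^ (s + 1) := by
  rw [← pow_mul, S.q_eq, show (s + 1) * (2 * s + 1) = s + 1 + s * (2 * s + 2) by ring,
    pow_add, S.gpow_half, mul_neg_one]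

lemma frobDet_pow_q (S : SingerSetup q s g) (x y : K) :
    frobDet q s g x y ^ q = frobDet q s g x y := by
  have hsub := S.sub_pow (x * y ^ q) (x ^ q * y)
  simp only [mul_pow, S.pow_q_pow_q] at hsub
  rw [frobDet, div_pow, hsub, S.gpow_s_succ_pow_q, div_neg, ← neg_div, neg_sub]

lemma frobDet_gpow_eq_zero_iff (S : SingerSetup q s g) (a b : ℕ) :
    frobDet q s g ((g : K) ^ a) ((g : K) ^ b) = 0 ↔ a ≡ b [MOD 2 * s + 2] := by
  have hs : (2 * s : ℤ) ≠ 0 := by have := S.s_pos; omega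
  have hdiff : ((a * q + b : ℕ) : ℤ) - (a + b * q : ℕ) = 2 * s * ((a : ℤ) - b) := by
    push_cast [S.q_eq]; ring
  have hord : ((2 * s * (2 * s + 2) : ℕ) : ℤ) = 2 * s * ((2 * s + 2 : ℕ) : ℤ) := by
    push_cast; ring
  rw [frobDet, div_eq_zero_iff, or_iff_left (pow_ne_zero _ (Units.ne_zero g)), sub_eq_zero,
    ← pow_mul, ← pow_mul, ← pow_add, ← pow_add, S.gpow_eq_gpow_iff, Nat.modEq_iff_dvd,
    Nat.modEq_iff_dvd, hdiff, hord, mul_dvd_mul_iff_left hs, dvd_sub_comm]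

lemma pow_s_eq_one_or (S : SingerSetup q s g) {x : K} (hx : x ^ q = x) (hx0 : x ≠ 0) :
    x ^ s = 1 ∨ x ^ s = -1 := by
  refine mul_self_eq_one_iff.mp (mul_left_cancel₀ hx0 ?_)
  rw [← pow_add, ← pow_succ', show s + s + 1 = q by rw [S.q_eq]; ring, hx, mul_one]

lemma frobDet_gpow_ne_zero (S : SingerSetup q s g) {a t : ℕ} (ht : t < 2 * s + 2)
    (hne : t ≠ a % (2 * s + 2)) : frobDet q s g ((g : K) ^ a) ((g : K) ^ t) ≠ 0 := by
  rw [Ne, S.frobDet_gpow_eq_zero_iff, Nat.ModEq, Nat.mod_eq_of_lt ht]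
  exact fun h => hne h.symm

lemma gpow_mul_gpow_pow_q (S : SingerSetup q s g) (n : ℕ) :
    (g : K) ^ n * ((g : K) ^ n) ^ q = ((g : K) ^ (2 * s + 2)) ^ n := by
  rw [← pow_mul, ← pow_add, ← pow_mul, S.q_eq]; ring_nf

end SingerSetup

section Conference

variable [DecidableEq K] {s : ℕ}

def eulerChar (s : ℕ) (x : K) : ℤ := if x = 0 then 0 else if x ^ s = 1 then 1 else -1

@[simp]
lemma eulerChar_zero : eulerChar s (0 : K) = 0 := if_pos rfl

lemma eulerChar_eq_one_or {x : K} (hx : x ≠ 0) : eulerChar s x = 1 ∨ eulerChar s x = -1 := by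
  simp only [eulerChar, if_neg hx]; split_ifs <;> simp

lemma eulerChar_mul_self {x : K} (hx : x ≠ 0) : eulerChar s x * eulerChar s x = 1 := by
  rcases eulerChar_eq_one_or (s := s) hx with h | h <;> simp [h]

lemma eulerChar_neg (hs : Even s) (x : K) : eulerChar s (-x) = eulerChar s x := by
  simp [eulerChar, hs.neg_pow]

variable [Fintype K] {q : ℕ} {g : Kˣ}

lemma SingerSetup.eulerChar_mul (S : SingerSetup q s g) {x y : K} (hx : x ^ q = x)
    (hy : y ^ q = y) : eulerChar s (x * y) = eulerChar s x * eulerChar s y := by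
  by_cases hx0 : x = 0
  · simp [hx0]
  by_cases hy0 : y = 0
  · simp [hy0]
  rcases S.pow_s_eq_one_or hx hx0 with h1 | h1 <;> rcases S.pow_s_eq_one_or hy hy0 with h2 | h2 <;>
    simp [eulerChar, hx0, hy0, mul_pow, h1, h2, S.neg_one_ne_one]

lemma SingerSetup.eulerChar_gen_pow (S : SingerSetup q s g) (k : ℕ) :
    eulerChar s (((g : K) ^ (2 * s + 2)) ^ k) = (-1) ^ k := by
  have h : (((g : K) ^ (2 * s + 2)) ^ k) ^ s = (-1) ^ k := by
    rw [pow_right_comm, S.gen_pow_s]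
  rcases k.even_or_odd with hk | hk <;> simp [eulerChar, h, hk.neg_one_pow, S.neg_one_ne_one]

lemma SingerSetup.eulerChar_gen_pow_mul (S : SingerSetup q s g) (k : ℕ) {x : K}
    (hx : x ^ q = x) :
    eulerChar s (((g : K) ^ (2 * s + 2)) ^ k * x) = (-1) ^ k * eulerChar s x := by
  rw [S.eulerChar_mul (by rw [pow_right_comm, S.gen_pow_q]) hx, S.eulerChar_gen_pow]

lemma SingerSetup.card_fixed_le (S : SingerSetup q s g) : #({x | x ^ q = x} : Finset K) ≤ q := by
  have hq : 1 < q := by have := S.s_pos; rw [S.q_eq]; omega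
  refine (Polynomial.card_le_degree_of_subset_roots fun x hx => ?_).trans_eq
    (FiniteField.X_pow_card_sub_X_natDegree_eq K hq)
  rw [Polynomial.mem_roots (FiniteField.X_pow_card_sub_X_ne_zero K hq)]
  simpa [sub_eq_zero] using hx

lemma SingerSetup.sum_eulerChar_fixed (S : SingerSetup q s g) :
    ∑ x ∈ ({x | x ^ q = x} : Finset K), eulerChar s x = 0 := by
  set c : K := (g : K) ^ (2 * s + 2)
  have hc : c ≠ 0 := pow_ne_zero _ (Units.ne_zero g)
  have hshift : ∑ x ∈ ({x | x ^ q = x} : Finset K), eulerChar s (c * x) =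
      ∑ x ∈ ({x | x ^ q = x} : Finset K), eulerChar s x :=
    Finset.sum_nbij' (c * ·) (c⁻¹ * ·) (by simp [mul_pow, S.gen_pow_q, c])
      (by simp [mul_pow, inv_pow, S.gen_pow_q, c]) (by simp [hc]) (by simp [hc]) (fun _ _ => rfl)
  have hneg : ∀ x ∈ ({x | x ^ q = x} : Finset K), eulerChar s (c * x) = -eulerChar s x :=
    fun x hx => by
      simpa using S.eulerChar_gen_pow_mul 1 (x := x) (by simpa using hx)
  rw [Finset.sum_congr rfl hneg, Finset.sum_neg_distrib, neg_eq_iff_add_eq_zero] at hshift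
  omega

lemma SingerSetup.eulerChar_mul_eulerChar (S : SingerSetup q s g) {a b : K} (ha : a ^ q = a)
    (hb : b ^ q = b) (ha0 : a ≠ 0) : eulerChar s a * eulerChar s b = eulerChar s (b / a) := by
  have hba : (b / a) ^ q = b / a := by rw [div_pow, ha, hb]
  rw [← mul_div_cancel₀ b ha0, S.eulerChar_mul ha hba, ← mul_assoc, eulerChar_mul_self ha0,
    one_mul, mul_div_cancel₀ b ha0]

lemma SingerSetup.sum_eulerChar_frobDet_mul_eq_zero (S : SingerSetup q s g) {ι : Type*}
    (T : Finset ι) (z : ι → K) {x y : K} (hxy : frobDet q s g x y ≠ 0)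
    (hxz : ∀ i ∈ T, frobDet q s g x (z i) ≠ 0)
    (hz : ∀ i ∈ T, ∀ j ∈ T, frobDet q s g (z i) (z j) = 0 → i = j) (hT : q ≤ #T) :
    ∑ i ∈ T, eulerChar s (frobDet q s g x (z i)) * eulerChar s (frobDet q s g y (z i)) = 0 := by
  set r : ι → K := fun i => frobDet q s g y (z i) / frobDet q s g x (z i)
  have hinj : Set.InjOn r T := by
    intro i hi j hj hij
    refine hz i hi j hj ((mul_eq_zero.mp ?_).resolve_left hxy)
    rw [frobDet_mul_frobDet, sub_eq_zero]
    rw [div_eq_div_iff (hxz i hi) (hxz j hj)] at hij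
    linear_combination -hij
  have himage : T.image r = ({x | x ^ q = x} : Finset K) := by
    refine Finset.eq_of_subset_of_card_le (fun u hu => ?_) ?_
    · obtain ⟨i, -, rfl⟩ := Finset.mem_image.mp hu
      simp [r, div_pow, S.frobDet_pow_q]
    · rw [Finset.card_image_of_injOn hinj]
      exact S.card_fixed_le.trans hT
  calc ∑ i ∈ T, eulerChar s (frobDet q s g x (z i)) * eulerChar s (frobDet q s g y (z i))
      = ∑ i ∈ T, eulerChar s (r i) := Finset.sum_congr rfl fun i hi =>
        S.eulerChar_mul_eulerChar (S.frobDet_pow_q _ _) (S.frobDet_pow_q _ _) (hxz i hi)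
    _ = 0 := by rw [← Finset.sum_image hinj, himage, S.sum_eulerChar_fixed]

lemma SingerSetup.sum_eulerChar_frobDet_gpow_sq (S : SingerSetup q s g) (a : ℕ) :
    ∑ t ∈ range (2 * s + 2), eulerChar s (frobDet q s g ((g : K) ^ a) ((g : K) ^ t)) *
      eulerChar s (frobDet q s g ((g : K) ^ a) ((g : K) ^ t)) = q := by
  have ht₀ : a % (2 * s + 2) ∈ range (2 * s + 2) := mem_range.mpr (Nat.mod_lt _ (by omega))
  rw [← Finset.sum_erase_add _ _ ht₀,
    (S.frobDet_gpow_eq_zero_iff a _).mpr (Nat.mod_modEq a _).symm, eulerChar_zero, mul_zero,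
    add_zero, Finset.sum_congr rfl fun t ht => eulerChar_mul_self (S.frobDet_gpow_ne_zero
      (mem_range.mp (mem_of_mem_erase ht)) (ne_of_mem_erase ht)),
    sum_const, card_erase_of_mem ht₀, card_range, S.q_eq]
  simp

lemma SingerSetup.sum_eulerChar_frobDet_gpow_mul_eq_zero (S : SingerSetup q s g) {a b : ℕ}
    (hab : ¬ a ≡ b [MOD 2 * s + 2]) :
    ∑ t ∈ range (2 * s + 2), eulerChar s (frobDet q s g ((g : K) ^ a) ((g : K) ^ t)) *
      eulerChar s (frobDet q s g ((g : K) ^ b) ((g : K) ^ t)) = 0 := by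
  have ht₀ : a % (2 * s + 2) ∈ range (2 * s + 2) := mem_range.mpr (Nat.mod_lt _ (by omega))
  rw [← Finset.sum_erase_add _ _ ht₀,
    (S.frobDet_gpow_eq_zero_iff a _).mpr (Nat.mod_modEq a _).symm, eulerChar_zero, zero_mul,
    add_zero]
  refine S.sum_eulerChar_frobDet_mul_eq_zero _ _ (mt (S.frobDet_gpow_eq_zero_iff a b).mp hab)
    (fun t ht => S.frobDet_gpow_ne_zero (mem_range.mp (mem_of_mem_erase ht)) (ne_of_mem_erase ht))
    (fun t ht u hu h => ?_) (by simp [card_erase_of_mem ht₀, S.q_eq])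
  rw [S.frobDet_gpow_eq_zero_iff, Nat.ModEq, Nat.mod_eq_of_lt (mem_range.mp (mem_of_mem_erase ht)),
    Nat.mod_eq_of_lt (mem_range.mp (mem_of_mem_erase hu))] at h
  exact h

def blockEntry (q s : ℕ) (g : Kˣ) (r a b : ℕ) : ℤ :=
  (-1) ^ (a + b) * eulerChar s (frobDet q s g ((g : K) ^ (2 * a)) ((g : K) ^ (2 * b + r)))

lemma SingerSetup.blockEntry_add_left (S : SingerSetup q s g) (r a b : ℕ) :
    blockEntry q s g r (a + (s + 1)) b = blockEntry q s g r a b := by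
  have hg : (g : K) ^ (2 * (a + (s + 1))) = ((g : K) ^ (2 * s + 2)) ^ 1 * (g : K) ^ (2 * a) := by
    rw [pow_one, ← pow_add]; ring_nf
  have hsign : (-1 : ℤ) ^ (a + (s + 1) + b) = -(-1) ^ (a + b) := by
    rw [add_right_comm, pow_add, S.even_s.add_one.neg_one_pow, mul_neg_one]
  rw [blockEntry, blockEntry, hg, frobDet_mul_left (by rw [pow_one, S.gen_pow_q]),
    S.eulerChar_gen_pow_mul 1 (S.frobDet_pow_q _ _), hsign]
  ring

lemma SingerSetup.blockEntry_add_right (S : SingerSetup q s g) (r a b : ℕ) :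
    blockEntry q s g r a (b + (s + 1)) = blockEntry q s g r a b := by
  have hg : (g : K) ^ (2 * (b + (s + 1)) + r) =
      ((g : K) ^ (2 * s + 2)) ^ 1 * (g : K) ^ (2 * b + r) := by
    rw [pow_one, ← pow_add]; ring_nf
  have hsign : (-1 : ℤ) ^ (a + (b + (s + 1))) = -(-1) ^ (a + b) := by
    rw [← add_assoc, pow_add, S.even_s.add_one.neg_one_pow, mul_neg_one]
  rw [blockEntry, blockEntry, hg, frobDet_mul_right (by rw [pow_one, S.gen_pow_q]),
    S.eulerChar_gen_pow_mul 1 (S.frobDet_pow_q _ _), hsign]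
  ring

lemma SingerSetup.blockEntry_add_add (S : SingerSetup q s g) (r a b k : ℕ) :
    blockEntry q s g r (a + k) (b + k) = blockEntry q s g r a b := by
  have ha : (g : K) ^ (2 * (a + k)) = (g : K) ^ (2 * k) * (g : K) ^ (2 * a) := by
    rw [← pow_add]; ring_nf
  have hb : (g : K) ^ (2 * (b + k) + r) = (g : K) ^ (2 * k) * (g : K) ^ (2 * b + r) := by
    rw [← pow_add]; ring_nf
  have hsign : (-1 : ℤ) ^ (a + k + (b + k)) = (-1) ^ (a + b) := by
    rw [show a + k + (b + k) = a + b + 2 * k by ring, pow_add, pow_mul]; simp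
  rw [blockEntry, blockEntry, ha, hb, frobDet_mul_mul, S.gpow_mul_gpow_pow_q,
    S.eulerChar_gen_pow_mul _ (S.frobDet_pow_q _ _), hsign, pow_mul]
  simp

def singerBlock (q s : ℕ) (g : Kˣ) (r : ℕ) : Matrix (ZMod (s + 1)) (ZMod (s + 1)) ℤ :=
  Matrix.of fun i j => blockEntry q s g r i.val j.val

lemma SingerSetup.isCirculant_singerBlock (S : SingerSetup q s g) (r : ℕ) :
    IsCirculant (singerBlock q s g r) := by
  intro i j k
  have hleft : Function.Periodic (fun a => blockEntry q s g r a ((j.val + k.val) % (s + 1)))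
      (s + 1) := fun a => S.blockEntry_add_left r a _
  have hright : Function.Periodic (fun b => blockEntry q s g r (i.val + k.val) b) (s + 1) :=
    fun b => S.blockEntry_add_right r _ b
  simp only [singerBlock, Matrix.of_apply, ZMod.val_add]
  rw [hleft.map_mod_nat, hright.map_mod_nat, S.blockEntry_add_add]

lemma SingerSetup.singerBlock_gram (S : SingerSetup q s g) :
    singerBlock q s g 0 * (singerBlock q s g 0)ᵀ + singerBlock q s g 1 * (singerBlock q s g 1)ᵀ =
      (q : ℤ) • 1 := by
  ext i j
  set W : ℕ → ℕ → ℤ := fun a t => eulerChar s (frobDet q s g ((g : K) ^ a) ((g : K) ^ t))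
  have hterm : ∀ k : ℕ, blockEntry q s g 0 i.val k * blockEntry q s g 0 j.val k +
      blockEntry q s g 1 i.val k * blockEntry q s g 1 j.val k =
      (-1) ^ (i.val + j.val) * (W (2 * i.val) (2 * k) * W (2 * j.val) (2 * k) +
        W (2 * i.val) (2 * k + 1) * W (2 * j.val) (2 * k + 1)) := by
    intro k
    have hsign : (-1 : ℤ) ^ (i.val + k) * (-1) ^ (j.val + k) = (-1) ^ (i.val + j.val) := by
      rw [← pow_add, show i.val + k + (j.val + k) = i.val + j.val + 2 * k by ring, pow_add,
        pow_mul]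
      simp
    simp only [blockEntry, add_zero, W]
    linear_combination (W (2 * i.val) (2 * k) * W (2 * j.val) (2 * k) +
        W (2 * i.val) (2 * k + 1) * W (2 * j.val) (2 * k + 1)) * hsign
  simp only [Matrix.add_apply, mul_apply, transpose_apply, singerBlock, of_apply,
    Matrix.smul_apply, one_apply, ← sum_add_distrib]
  rw [ZMod.sum_univ_val_eq_sum_range (s + 1) fun k =>
      blockEntry q s g 0 i.val k * blockEntry q s g 0 j.val k +
        blockEntry q s g 1 i.val k * blockEntry q s g 1 j.val k,
    sum_congr rfl fun k _ => hterm k, ← mul_sum,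
    ← Finset.sum_range_two_mul (fun t => W (2 * i.val) t * W (2 * j.val) t), mul_add, mul_one]
  by_cases hij : i = j
  · subst hij
    rw [S.sum_eulerChar_frobDet_gpow_sq, if_pos rfl, ← two_mul, pow_mul]
    simp
  · rw [S.sum_eulerChar_frobDet_gpow_mul_eq_zero, if_neg hij]
    · simp
    · exact mt ZMod.eq_of_two_mul_val_modEq hij

lemma SingerSetup.blockEntry_eq_one_or (S : SingerSetup q s g) {r a b : ℕ}
    (h : ¬ 2 * a ≡ 2 * b + r [MOD 2 * s + 2]) :
    blockEntry q s g r a b = 1 ∨ blockEntry q s g r a b = -1 := by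
  rcases neg_one_pow_eq_or ℤ (a + b) with h₁ | h₁ <;>
    rcases eulerChar_eq_one_or (s := s) (mt (S.frobDet_gpow_eq_zero_iff _ _).mp h) with h₂ | h₂ <;>
    simp [blockEntry, h₁, h₂]

lemma SingerSetup.singerBlock_zero_transpose (S : SingerSetup q s g) :
    (singerBlock q s g 0)ᵀ = singerBlock q s g 0 := by
  ext i j
  simp only [transpose_apply, singerBlock, of_apply, blockEntry, add_zero]
  rw [frobDet_swap, eulerChar_neg S.even_s, add_comm]

lemma SingerSetup.isPropus (S : SingerSetup q s g) :
    IsPropus (singerBlock q s g 0 + 1) (singerBlock q s g 1) (singerBlock q s g 1)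
      (singerBlock q s g 0 - 1) := by
  refine IsPropus.of_conference (by rw [S.q_eq]; ring) (S.isCirculant_singerBlock 0)
    (S.isCirculant_singerBlock 1) S.singerBlock_zero_transpose (fun i => ?_) (fun i j hij => ?_)
    (fun i j => ?_) S.singerBlock_gram
  · simp [singerBlock, blockEntry, frobDet_self]
  · exact S.blockEntry_eq_one_or (by simpa using mt ZMod.eq_of_two_mul_val_modEq hij)
  · refine S.blockEntry_eq_one_or fun h => ?_
    have h2 := (show 2 * s + 2 = 2 * (s + 1) by ring) ▸ h |>.of_mul_right (s + 1)
    rw [Nat.ModEq] at h2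
    omega

end Conference

lemma exists_singerSetup {q s : ℕ} (hq : IsPrimePow q) (hqs : q = 2 * s + 1) (hs : Even s) :
    ∃ (K : Type) (_ : Field K) (_ : Fintype K) (g : Kˣ), SingerSetup q s g := by
  obtain ⟨p, e, hp, he, rfl⟩ := hq
  have := Fact.mk hp.nat_prime
  let _ : Fintype (GaloisField p (2 * e)) := Fintype.ofFinite _
  obtain ⟨g, hg⟩ := IsCyclic.exists_generator (α := (GaloisField p (2 * e))ˣ)
  refine ⟨GaloisField p (2 * e), inferInstance, inferInstance, g, hqs, hs, ?_, hg,
    fun x y => sub_pow_char_pow x y e⟩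
  rw [← Nat.card_eq_fintype_card, GaloisField.card p (2 * e) (by omega), ← pow_mul, mul_comm]

end Propus

/-- Let `q ≡ 1 (mod 4)` be a prime power and `m = (q+1)/2` (i.e. `2m = q + 1`).
Then propus matrices of order `m` exist: circulant `±1` matrices `A, B, C, D`
with `Aᵀ = A`, `B = C` and `A·Aᵀ + B·Bᵀ + C·Cᵀ + D·Dᵀ = 4m·I`; consequently
there exists a symmetric Hadamard matrix of order `2(q+1)`. -/
theorem propus_matrices_exist (q m : ℕ) [NeZero m]
    (hq : IsPrimePow q) (hq4 : q % 4 = 1) (hm : 2 * m = q + 1) :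
    (∃ A B C D : Matrix (ZMod m) (ZMod m) ℤ,
      IsCirculant A ∧ IsCirculant B ∧ IsCirculant C ∧ IsCirculant D ∧
      (∀ i j, A i j = 1 ∨ A i j = -1) ∧
      (∀ i j, B i j = 1 ∨ B i j = -1) ∧
      (∀ i j, C i j = 1 ∨ C i j = -1) ∧
      (∀ i j, D i j = 1 ∨ D i j = -1) ∧
      Aᵀ = A ∧ B = C ∧
      A * Aᵀ + B * Bᵀ + C * Cᵀ + D * Dᵀ =
        ((4 * m : ℕ) : ℤ) • (1 : Matrix (ZMod m) (ZMod m) ℤ)) ∧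
    (∃ H : Matrix (Fin (2 * (q + 1))) (Fin (2 * (q + 1))) ℤ,
      (∀ i j, H i j = 1 ∨ H i j = -1) ∧
      H * Hᵀ = ((2 * (q + 1) : ℕ) : ℤ) •
        (1 : Matrix (Fin (2 * (q + 1))) (Fin (2 * (q + 1))) ℤ) ∧
      Hᵀ = H) := by
  obtain ⟨s, rfl⟩ : ∃ s, m = s + 1 := ⟨m - 1, by omega⟩
  obtain ⟨K, _, _, g, S⟩ := Propus.exists_singerSetup hq (s := s) (by omega) ⟨s / 2, by omega⟩
  classical
  have hP := S.isPropus
  exact ⟨⟨_, _, _, _, hP.isCirculant_A, hP.isCirculant_B, hP.isCirculant_C, hP.isCirculant_D,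
    hP.isSignMatrix_A, hP.isSignMatrix_B, hP.isSignMatrix_C, hP.isSignMatrix_D, hP.transpose_A,
    hP.B_eq_C, hP.gram⟩, hP.exists_symm_hadamard (by omega)⟩
end

section
/- Let v be a positive integer and let X₁, X₂, X₃, X₄ be subsets of ℤ/vℤ of cardinalities k₁, k₂, k₃, k₄, and set λ = k₁ + k₂ + k₃ + k₄ − v. For each i let Aᵢ be the associated binary circulant matrix of order v, i.e. Aᵢ(r,s) = −1 if s − r ∈ Xᵢ and Aᵢ(r,s) = +1 otherwise. Then A₁·A₁ᵀ + A₂·A₂ᵀ + A₃·A₃ᵀ + A₄·A₄ᵀ = 4v·I holds if and only if the sets X₁, X₂, X₃, X₄ form a supplementary difference set with parameters (v; k₁, k₂, k₃, k₄; λ), i.e. for every nonzero d ∈ ℤ/vℤ, the total number of pairs (x, y) with x, y in the same block Xᵢ and x − y = d, summed over i = 1, 2, 3, 4, equals λ. -/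
open Matrix Finset

def circOf {v : ℕ} (X : Finset (ZMod v)) : Matrix (ZMod v) (ZMod v) ℤ :=
  Matrix.of fun r s => if s - r ∈ X then -1 else 1

lemma card_shift {v : ℕ} [NeZero v] (X : Finset (ZMod v)) (r : ZMod v) :
    (Finset.univ.filter (fun j : ZMod v => j - r ∈ X)).card = X.card := by
  refine Finset.card_bij' (fun j _ => j - r) (fun x _ => x + r) ?_ ?_ ?_ ?_
  · intro j hj; simpa using (Finset.mem_filter.mp hj).2
  · intro x hx; simp [hx]
  · intro j hj; ring
  · intro x hx; ring

lemma card_pair {v : ℕ} [NeZero v] (X : Finset (ZMod v)) (r s : ZMod v) :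
    (Finset.univ.filter (fun j : ZMod v => j - r ∈ X ∧ j - s ∈ X)).card =
      ((X ×ˢ X).filter (fun p => p.1 - p.2 = s - r)).card := by
  refine Finset.card_bij' (fun j _ => (j - r, j - s)) (fun p _ => p.1 + r) ?_ ?_ ?_ ?_
  · intro j hj
    obtain ⟨ha, hb⟩ := (Finset.mem_filter.mp hj).2
    refine Finset.mem_filter.mpr ⟨Finset.mem_product.mpr ⟨ha, hb⟩, ?_⟩
    ring
  · intro p hp
    obtain ⟨hm, he⟩ := Finset.mem_filter.mp hp
    obtain ⟨ha, hb⟩ := Finset.mem_product.mp hm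
    refine Finset.mem_filter.mpr ⟨Finset.mem_univ _, ?_, ?_⟩
    · simpa using ha
    · have h2 : p.1 + r - s = p.2 := by linear_combination he
      rw [h2]; exact hb
  · intro j hj; ring
  · intro p hp
    obtain ⟨hm, he⟩ := Finset.mem_filter.mp hp
    have h2 : p.1 + r - s = p.2 := by linear_combination he
    have h1 : p.1 + r - r = p.1 := by ring
    exact Prod.ext h1 h2

lemma card_diag {v : ℕ} [NeZero v] (X : Finset (ZMod v)) :
    ((X ×ˢ X).filter (fun p => p.1 - p.2 = 0)).card = X.card := by
  refine Finset.card_bij' (fun p _ => p.1) (fun x _ => (x, x)) ?_ ?_ ?_ ?_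
  · intro p hp; exact (Finset.mem_product.mp (Finset.mem_filter.mp hp).1).1
  · intro x hx; exact Finset.mem_filter.mpr ⟨Finset.mem_product.mpr ⟨hx, hx⟩, by simp⟩
  · intro p hp
    have h := (Finset.mem_filter.mp hp).2
    have h' : p.1 = p.2 := by simpa [sub_eq_zero] using h
    exact Prod.ext rfl h'
  · intro x hx; rfl

lemma entry {v : ℕ} [NeZero v] (X : Finset (ZMod v)) (r s : ZMod v) :
    (circOf X * (circOf X)ᵀ) r s =
      (v : ℤ) - 4 * X.card + 4 * ((X ×ˢ X).filter (fun p => p.1 - p.2 = s - r)).card := by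
  rw [Matrix.mul_apply]
  have key : ∀ j : ZMod v, circOf X r j * (circOf X)ᵀ j s =
      1 - 2 * (if j - r ∈ X then (1:ℤ) else 0) - 2 * (if j - s ∈ X then (1:ℤ) else 0)
        + 4 * (if j - r ∈ X ∧ j - s ∈ X then (1:ℤ) else 0) := by
    intro j
    simp only [circOf, Matrix.transpose_apply, Matrix.of_apply]
    by_cases ha : j - r ∈ X <;> by_cases hb : j - s ∈ X <;> simp [ha, hb]
  rw [Finset.sum_congr rfl (fun j _ => key j)]
  simp only [Finset.sum_add_distrib, Finset.sum_sub_distrib, ← Finset.mul_sum,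
    Finset.sum_boole, Finset.sum_const, Finset.card_univ]
  rw [card_shift X r, card_shift X s]
  have := card_pair X r s
  rw [show (Finset.univ.filter (fun j : ZMod v => j - r ∈ X ∧ j - s ∈ X)).card =
    ((X ×ˢ X).filter (fun p => p.1 - p.2 = s - r)).card from this]
  simp [ZMod.card]
  ring

/-- Four subsets `X₁, X₂, X₃, X₄` of `ℤ/vℤ`, of cardinalities `k₁, k₂, k₃, k₄`,
have associated binary circulant matrices `Aᵢ` satisfying
`A₁·A₁ᵀ + A₂·A₂ᵀ + A₃·A₃ᵀ + A₄·A₄ᵀ = 4v·I` if and only if they form a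
supplementary difference set with parameters `(v; k₁, k₂, k₃, k₄; λ)` where
`λ = k₁ + k₂ + k₃ + k₄ − v`: every nonzero `d ∈ ℤ/vℤ` occurs exactly `λ` times
as a difference `x − y` with `x, y` in the same block. -/
theorem circulant_sum_eq_iff_sds (v : ℕ) [NeZero v]
    (X₁ X₂ X₃ X₄ : Finset (ZMod v)) (k₁ k₂ k₃ k₄ : ℕ)
    (h₁ : X₁.card = k₁) (h₂ : X₂.card = k₂) (h₃ : X₃.card = k₃) (h₄ : X₄.card = k₄) :
    circOf X₁ * (circOf X₁)ᵀ + circOf X₂ * (circOf X₂)ᵀ +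
      circOf X₃ * (circOf X₃)ᵀ + circOf X₄ * (circOf X₄)ᵀ =
      ((4 * v : ℕ) : ℤ) • (1 : Matrix (ZMod v) (ZMod v) ℤ) ↔
    ∀ d : ZMod v, d ≠ 0 →
      ((((X₁ ×ˢ X₁).filter (fun p => p.1 - p.2 = d)).card : ℤ) +
        (((X₂ ×ˢ X₂).filter (fun p => p.1 - p.2 = d)).card : ℤ) +
        (((X₃ ×ˢ X₃).filter (fun p => p.1 - p.2 = d)).card : ℤ) +
        (((X₄ ×ˢ X₄).filter (fun p => p.1 - p.2 = d)).card : ℤ)) =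
      ((k₁ : ℤ) + k₂ + k₃ + k₄) - v := by
  subst h₁ h₂ h₃ h₄
  constructor
  · intro h d hd
    have hh := congrFun (congrFun h 0) d
    simp only [Matrix.add_apply, entry, Matrix.smul_apply, Matrix.one_apply,
      if_neg (Ne.symm hd), smul_zero, sub_zero] at hh
    linarith
  · intro h
    ext r s
    by_cases hrs : r = s
    · subst hrs
      simp only [Matrix.add_apply, entry, Matrix.smul_apply, Matrix.one_apply_eq,
        sub_self, card_diag, smul_eq_mul, mul_one]
      push_cast
      ring
    · have hd : s - r ≠ 0 := sub_ne_zero.mpr (Ne.symm hrs)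
      have hh := h (s - r) hd
      simp only [Matrix.add_apply, entry, Matrix.smul_apply, Matrix.one_apply,
        if_neg hrs, smul_zero]
      linarith
end

section
/- Let D = {0,1,3,4,5,8,12,13,14,18,19,20,21,23,26,27,29,30,32,34,36} and A = {0,1,2,4,8,11,16,21,22,27,32,35,39,41,42} be subsets of ℤ/43ℤ, and let MD, MA be the associated binary circulant matrices of order 43 (with entry −1 at (r,s) if s − r lies in the set, and +1 otherwise). Then MA is symmetric (MAᵀ = MA) and MA·MAᵀ + MD·MDᵀ = 84·I + 2·J, where J is the 43 × 43 all-ones matrix; that is, the pair (D, A) is a supplementary difference set with parameters (43; 21, 15; 15) whose circulants yield D-optimal matrices of order 86. -/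
open Matrix

private def fch (X : Finset (ZMod 43)) (x : ZMod 43) : ℤ := if x ∈ X then -1 else 1

private def Aset : Finset (ZMod 43) := {0, 1, 2, 4, 8, 11, 16, 21, 22, 27, 32, 35, 39, 41, 42}
private def Dset : Finset (ZMod 43) :=
  {0, 1, 3, 4, 5, 8, 12, 13, 14, 18, 19, 20, 21, 23, 26, 27, 29, 30, 32, 34, 36}

set_option maxHeartbeats 4000000 in
set_option maxRecDepth 10000 in
private lemma key : ∀ d : ZMod 43,
    ((∑ u : ZMod 43, fch Aset (u + d) * fch Aset u) +
      ∑ u : ZMod 43, fch Dset (u + d) * fch Dset u) = if d = 0 then 86 else 2 := by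
  decide

set_option maxHeartbeats 4000000 in
set_option maxRecDepth 10000 in
private lemma memneg : ∀ x : ZMod 43, (-x ∈ Aset) = (x ∈ Aset) := by decide

private lemma reindexSum (X : Finset (ZMod 43)) (r s : ZMod 43) :
    ∑ t : ZMod 43, fch X (t - r) * fch X (t - s) =
      ∑ u : ZMod 43, fch X (u + (s - r)) * fch X u := by
  rw [← Equiv.sum_comp (Equiv.addRight s) (fun t => fch X (t - r) * fch X (t - s))]
  apply Finset.sum_congr rfl
  intro u _
  have h1 : (Equiv.addRight s) u - r = u + (s - r) := by
    simp [Equiv.addRight]; ring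
  have h2 : (Equiv.addRight s) u - s = u := by
    simp [Equiv.addRight]
  rw [h1, h2]

/-- For the subsets `D = {0,1,3,4,5,8,12,13,14,18,19,20,21,23,26,27,29,30,32,34,36}`
(of cardinality 21) and `A = {0,1,2,4,8,11,16,21,22,27,32,35,39,41,42}` (of
cardinality 15) of `ℤ/43ℤ`, the associated binary circulant matrix `MA` is
symmetric and `MA·MAᵀ + MD·MDᵀ = 84·I + 2·J`, where `J` is the all-ones matrix;
i.e. `(D, A)` is an SDS with parameters `(43; 21, 15; 15)` whose circulants yield
D-optimal matrices of order `86`. -/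
theorem d_optimal_86_construction :
    ({0, 1, 3, 4, 5, 8, 12, 13, 14, 18, 19, 20, 21, 23, 26, 27, 29, 30, 32, 34, 36} :
      Finset (ZMod 43)).card = 21 ∧
    ({0, 1, 2, 4, 8, 11, 16, 21, 22, 27, 32, 35, 39, 41, 42} :
      Finset (ZMod 43)).card = 15 ∧
    (circOf ({0, 1, 2, 4, 8, 11, 16, 21, 22, 27, 32, 35, 39, 41, 42} :
      Finset (ZMod 43)))ᵀ =
      circOf ({0, 1, 2, 4, 8, 11, 16, 21, 22, 27, 32, 35, 39, 41, 42} :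
        Finset (ZMod 43)) ∧
    circOf ({0, 1, 2, 4, 8, 11, 16, 21, 22, 27, 32, 35, 39, 41, 42} :
        Finset (ZMod 43)) *
      (circOf ({0, 1, 2, 4, 8, 11, 16, 21, 22, 27, 32, 35, 39, 41, 42} :
        Finset (ZMod 43)))ᵀ +
      circOf ({0, 1, 3, 4, 5, 8, 12, 13, 14, 18, 19, 20, 21, 23, 26, 27, 29, 30, 32, 34, 36} :
        Finset (ZMod 43)) *
      (circOf ({0, 1, 3, 4, 5, 8, 12, 13, 14, 18, 19, 20, 21, 23, 26, 27, 29, 30, 32, 34, 36} :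
        Finset (ZMod 43)))ᵀ =
      (84 : ℤ) • (1 : Matrix (ZMod 43) (ZMod 43) ℤ) +
        (2 : ℤ) • Matrix.of (fun _ _ => (1 : ℤ)) := by
  refine ⟨by decide, by decide, ?_, ?_⟩
  · ext r s
    show circOf Aset s r = circOf Aset r s
    simp only [circOf, Matrix.of_apply]
    rw [show r - s = -(s - r) by ring]; simp only [memneg]
  · ext r s
    show (∑ t : ZMod 43, circOf Aset r t * circOf Aset s t) +
        (∑ t : ZMod 43, circOf Dset r t * circOf Dset s t) = _
    have hA : ∀ (X : Finset (ZMod 43)), ∀ t, circOf X r t * circOf X s t =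
        fch X (t - r) * fch X (t - s) := by
      intro X t; rfl
    simp only [hA]
    rw [reindexSum, reindexSum, key (s - r)]
    simp only [Matrix.add_apply, Matrix.smul_apply, Matrix.one_apply, Matrix.of_apply,
      smul_eq_mul, mul_one]
    by_cases h : r = s
    · simp [h]
    · have : s - r ≠ 0 := fun hc => h (by linear_combination -hc)
      simp [h, this]
end
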